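/- For an EDBM M in normal form on clocks C and a clock x ∈ C, let rel_x(M) be obtained by replacing every entry in the row and column of x (except the diagonal handling) by (?,=). Then ⟦rel_x(M)⟧ = rel_x(⟦M⟧) = { v[x:=d] : v ∈ ⟦M⟧, d ∈ ℝ≥0 ∪ {⊥} }. -/

import Mathlib

open scoped Classical

/-- Entries of an Event DBM: `(m,<)` / `(m,≤)` for `m ∈ ℤ`, `(∞,<)`, `(⊥,=)`, `(?,=)`. -/
inductive Entry where
  | bound (m : ℤ) (strict : Bool)
  | inf
  | bot
  | unc
deriving DecidableEq

/-- An EDBM on clocks `x₁,…,xₙ` (index `none` is the zero clock `x₀`). -/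
def EDBM (n : ℕ) := Option (Fin n) → Option (Fin n) → Entry

/-- A valuation of the `n` clocks (`none` is `⊥`). -/
def EVal (n : ℕ) := Fin n → Option ℝ

def ENonneg {n : ℕ} (v : EVal n) : Prop := ∀ i r, v i = some r → 0 ≤ r

/-- The signed value `|v|`: prophecy clocks (as given by `isP`) are negated;
`x₀` has value `0`. -/
def svalE {n : ℕ} (isP : Fin n → Bool) (v : EVal n) : Option (Fin n) → Option ℝ
  | none => some 0
  | some i => (v i).map (fun r => if isP i then -r else r)

/-- Satisfaction of an entry by (signed) values `a`, `b`: encodes `a − b ≺ m`,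
with `(⊥,=)` requiring one side to be `⊥`, `(∞,<)` requiring both sides real,
and `(?,=)` always true. -/
def Entry.sat : Entry → Option ℝ → Option ℝ → Prop
  | .unc, _, _ => True
  | .bot, a, b => a = none ∨ b = none
  | .inf, a, b => a ≠ none ∧ b ≠ none
  | .bound m s, a, b => ∃ ra rb, a = some ra ∧ b = some rb ∧
      (if s then ra - rb < (m : ℝ) else ra - rb ≤ (m : ℝ))

/-- `⟦M⟧`: the set of valuations satisfying all constraints of `M`. -/
def sem {n : ℕ} (isP : Fin n → Bool) (M : EDBM n) : Set (EVal n) :=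
  { v | ENonneg v ∧ ∀ i j, (M i j).sat (svalE isP v i) (svalE isP v j) }

/-- The ordering on EDBM entries: `(m,≺) ≤ (m',≺')` iff `m' = ?`, or
`m < m'` (in `ℤ ∪ {∞}`), or `m = m'` and (`≺ = ≺'` or `≺' = ≤`). -/
def Entry.le : Entry → Entry → Prop
  | _, .unc => True
  | .unc, _ => False
  | .bot, .bot => True
  | .bot, _ => False
  | _, .bot => False
  | .inf, .inf => True
  | .inf, .bound _ _ => False
  | .bound _ _, .inf => True
  | .bound m s, .bound m' s' => m < m' ∨ (m = m' ∧ (s = s' ∨ s' = false))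

/-- The canonical empty EDBM `M_∅`. -/
def Mempty (n : ℕ) : EDBM n := fun _ _ => .bound (-1) true

/-- `(⊥,=)` may only occur in row or column `0`. -/
def EDBM.WF {n : ℕ} (M : EDBM n) : Prop := ∀ i j : Fin n, M (some i) (some j) ≠ .bot

/-- Structural coherence of `⊥`/`?` entries (conditions (i)–(iii) of normal form). -/
def Coherent {n : ℕ} (M : EDBM n) : Prop :=
  (∀ i : Fin n, (M (some i) none = .bot ↔ M none (some i) = .bot) ∧
      (M (some i) none = .unc ↔ M none (some i) = .unc)) ∧
  (∀ i : Fin n, (M (some i) none = .bot ∨ M (some i) none = .unc) →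
      ∀ j : Fin n, M (some i) (some j) = .unc ∧ M (some j) (some i) = .unc) ∧
  (∀ i j : Fin n, M (some i) (some j) = .unc ↔
      ((M (some i) none = .unc ∨ M (some i) none = .bot) ∨
       (M (some j) none = .unc ∨ M (some j) none = .bot)))

/-- Tightness: no entrywise-smaller EDBM has the same semantics. -/
def Tight {n : ℕ} (isP : Fin n → Bool) (M : EDBM n) : Prop :=
  ∀ M' : EDBM n, (∀ i j, Entry.le (M' i j) (M i j)) → sem isP M' = sem isP M → M' = M

/-- Normal form: either the canonical empty EDBM, or a nonempty, well-formed,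
coherent and tight (canonical) EDBM. -/
def InNormalForm {n : ℕ} (isP : Fin n → Bool) (M : EDBM n) : Prop :=
  M = Mempty n ∨ (sem isP M ≠ ∅ ∧ M.WF ∧ Coherent M ∧ Tight isP M)

/-- The `Future` operation on EDBMs. -/
noncomputable def futureE {n : ℕ} (isP : Fin n → Bool) (M : EDBM n) : EDBM n :=
  if M = Mempty n then Mempty n else
  fun i j =>
    match i, j with
    | some k, none =>
        if M (some k) none = .bot ∨ M (some k) none = .unc then M (some k) none
        else if isP k then .bound 0 false else .inf
    | i, j => M i j

/-- The `Past` operation on EDBMs. -/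
noncomputable def pastE {n : ℕ} (isP : Fin n → Bool) (M : EDBM n) : EDBM n :=
  if M = Mempty n then Mempty n else
  fun i j =>
    match i, j with
    | none, some k =>
        if M none (some k) = .bot ∨ M none (some k) = .unc then M none (some k)
        else if isP k then .inf else .bound 0 false
    | i, j => M i j

/-- Entrywise intersection of EDBMs; `M_∅` if either input is empty or some pair
of entries is `≤`-incomparable. -/
noncomputable def interE {n : ℕ} (M₁ M₂ : EDBM n) : EDBM n :=
  if M₁ = Mempty n ∨ M₂ = Mempty n then Mempty n
  else if ∀ i j, Entry.le (M₁ i j) (M₂ i j) ∨ Entry.le (M₂ i j) (M₁ i j) then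
    fun i j => if Entry.le (M₁ i j) (M₂ i j) then M₁ i j else M₂ i j
  else Mempty n

/-- Release of clock `k`: every entry in its row and column becomes `(?,=)`. -/
noncomputable def relE {n : ℕ} (M : EDBM n) (k : Fin n) : EDBM n :=
  if M = Mempty n then Mempty n else
  fun i j => if i = some k ∨ j = some k then .unc else M i j

/-- Time elapse on valuations: history clocks increase, prophecy clocks decrease. -/
def eElapse {n : ℕ} (isP : Fin n → Bool) (v : EVal n) (t : ℝ) : EVal n :=
  fun i => (v i).map (fun r => if isP i then r - t else r + t)

def eCanElapse {n : ℕ} (isP : Fin n → Bool) (v : EVal n) (t : ℝ) : Prop :=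
  0 ≤ t ∧ ∀ i r, isP i = true → v i = some r → t ≤ r

/-!
Releasing `x` only deletes constraints, so `⊇` is immediate. For `⊆`, a valuation `w` satisfying
the constraints that do not mention `x` must be given a new value for `x`. If `M(x, x₀)` is `(⊥,=)`
or `(?,=)`, coherence makes the whole row and column of `x` trivial for `x = ⊥`. Otherwise the
constraints on `|x|` are lower bounds `|w|(y) - M(y,x)` and upper bounds `|w|(y) + M(x,y)`.
Tightness gives `M(y,z) ≤ M(y,x) + M(x,z)`, so each lower bound is compatible with each upper
bound; as upper (lower) rays form a chain, one value meets them all. Tightness also bounds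
`M(x₀,x)` (for a prophecy clock, `M(x,x₀)`) by `(0,≤)`, so this value has the right sign.
-/

theorem exists_forall_mem_of_isUpperSet_of_isLowerSet {α ι : Type*} [LinearOrder α]
    [Nonempty α] [Finite ι] {A B : ι → Set α} (hA : ∀ i, IsUpperSet (A i))
    (hB : ∀ i, IsLowerSet (B i)) (hAB : ∀ i j, (A i ∩ B j).Nonempty) :
    ∃ x, ∀ i, x ∈ A i ∧ x ∈ B i := by
  cases isEmpty_or_nonempty ι with
  | inl _ => exact ⟨Classical.arbitrary α, isEmptyElim⟩
  | inr _ =>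
    obtain ⟨i₀, hi₀⟩ := Finite.exists_max fun i => (⟨A i, hA i⟩ : UpperSet α)
    obtain ⟨j₀, hj₀⟩ := Finite.exists_min fun i => (⟨B i, hB i⟩ : LowerSet α)
    obtain ⟨x, hxA, hxB⟩ := hAB i₀ j₀
    exact ⟨x, fun i => ⟨hi₀ i hxA, hj₀ i hxB⟩⟩

namespace Entry

theorem bound_sat_some (m : ℤ) (s : Bool) (a b : ℝ) :
    (bound m s).sat (some a) (some b) ↔ if s then a - b < m else a - b ≤ m := by
  simp [sat]

theorem le_refl (e : Entry) : e.le e := by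
  cases e <;> simp [Entry.le]

theorem le_total_of_ne_bot {a b : Entry} (ha : a ≠ bot) (hb : b ≠ bot) : a.le b ∨ b.le a := by
  cases a <;> cases b <;> simp_all [Entry.le]
  case bound.bound m s m' s' => cases s <;> cases s' <;> simp <;> omega

theorem sat_mono {e e' : Entry} (h : e.le e') {a b : Option ℝ} (hs : e.sat a b) : e'.sat a b := by
  cases e <;> cases e' <;> simp only [Entry.le] at h <;> try trivial
  case bound.bound m s m' s' =>
    obtain ⟨ra, rb, rfl, rfl, hs⟩ := hs
    rw [bound_sat_some]
    rcases h with h | ⟨rfl, h⟩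
    · have : (m : ℝ) < m' := by exact_mod_cast h
      split at hs <;> split <;> linarith
    · rcases h with rfl | rfl
      · exact hs
      · split at hs <;> simp only [Bool.false_eq_true, if_false] <;> linarith
  case bound.inf => obtain ⟨ra, rb, rfl, rfl, -⟩ := hs; simp [sat]

-- Only the sum of two bounds carries information; any other sum is `(?,=)`.
def add : Entry → Entry → Entry
  | bound m₁ s₁, bound m₂ s₂ => bound (m₁ + m₂) (s₁ || s₂)
  | _, _ => unc

instance : Add Entry := ⟨add⟩

theorem add_ne_bot (e₁ e₂ : Entry) : e₁ + e₂ ≠ bot := by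
  intro h; cases e₁ <;> cases e₂ <;> cases h

theorem sat_add {e₁ e₂ : Entry} {a b c : Option ℝ} (h₁ : e₁.sat a b) (h₂ : e₂.sat b c) :
    (e₁ + e₂).sat a c := by
  cases e₁ <;> cases e₂ <;> try trivial
  case bound.bound m₁ s₁ m₂ s₂ =>
    obtain ⟨ra, rb, rfl, rfl, h₁⟩ := h₁
    obtain ⟨_, rc, ⟨⟩, rfl, h₂⟩ := h₂
    refine ⟨ra, rc, rfl, rfl, ?_⟩
    push_cast
    cases s₁ <;> cases s₂ <;> simp_all <;> linarith

theorem ne_none_of_sat {e : Entry} (hbot : e ≠ bot) (hunc : e ≠ unc) {a b : Option ℝ}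
    (h : e.sat a b) : a ≠ none ∧ b ≠ none := by
  cases e
  case bound => obtain ⟨ra, rb, rfl, rfl, -⟩ := h; simp
  case inf => exact h
  all_goals contradiction

theorem sat_some_self {e : Entry} (hbot : e ≠ bot) {a : Option ℝ} (h : e.sat a a) (x : ℝ) :
    e.sat (some x) (some x) := by
  cases e
  case bound m s => obtain ⟨ra, _, rfl, ⟨⟩, h⟩ := h; exact ⟨x, x, rfl, rfl, by simpa using h⟩
  case inf => simp [sat]
  case bot => contradiction
  case unc => trivial

theorem isUpperSet_sat_right (e : Entry) (a : Option ℝ) :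
    IsUpperSet {x : ℝ | e.sat a (some x)} := by
  intro x y hxy hx
  cases e
  case bound m s =>
    obtain ⟨ra, _, rfl, ⟨⟩, h⟩ := hx
    refine ⟨ra, y, rfl, rfl, ?_⟩
    split at h <;> split <;> simp_all <;> linarith
  all_goals simp_all [sat]

theorem isLowerSet_sat_left (e : Entry) (b : Option ℝ) :
    IsLowerSet {x : ℝ | e.sat (some x) b} := by
  intro x y hxy hx
  cases e
  case bound m s =>
    obtain ⟨_, rb, ⟨⟩, rfl, h⟩ := hx
    refine ⟨y, rb, rfl, rfl, ?_⟩
    split at h <;> split <;> simp_all <;> linarith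
  all_goals simp_all [sat]

theorem exists_sat_sat_of_sat_add {e₁ e₂ : Entry} {a b : Option ℝ} (h : (e₁ + e₂).sat a b)
    (h₁ : e₁ ≠ bot) (h₂ : e₂ ≠ bot) (ha : e₁ ≠ unc → a ≠ none) (hb : e₂ ≠ unc → b ≠ none) :
    ∃ x, e₁.sat a (some x) ∧ e₂.sat (some x) b := by
  cases e₁ <;> cases e₂ <;> simp only [ne_eq, reduceCtorEq, not_false_eq_true, forall_const,
    not_true_eq_false] at h₁ h₂ ha hb
  case bound.bound m₁ s₁ m₂ s₂ =>
    obtain ⟨ra, rb, rfl, rfl, h⟩ := h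
    refine ⟨(ra - m₁ + rb + m₂) / 2, ⟨ra, _, rfl, rfl, ?_⟩, ⟨_, rb, rfl, rfl, ?_⟩⟩ <;>
      cases s₁ <;> cases s₂ <;> simp_all <;> linarith
  case bound.inf m s | bound.unc m s =>
    obtain ⟨ra, rfl⟩ := Option.ne_none_iff_exists'.1 ha
    exact ⟨ra - m + 1, ⟨ra, _, rfl, rfl, by split <;> linarith⟩, by simp_all [sat]⟩
  case inf.bound m s | unc.bound m s =>
    obtain ⟨rb, rfl⟩ := Option.ne_none_iff_exists'.1 hb
    exact ⟨rb + m - 1, by simp_all [sat], ⟨_, rb, rfl, rfl, by split <;> linarith⟩⟩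
  all_goals first | contradiction | exact ⟨0, by simp_all [sat]⟩

theorem exists_forall_sat {ι : Type*} [Finite ι] {lo hi : ι → Entry} {p : ι → Option ℝ}
    (hlo : ∀ i, lo i ≠ bot) (hhi : ∀ i, hi i ≠ bot)
    (hplo : ∀ i, lo i ≠ unc → p i ≠ none) (hphi : ∀ i, hi i ≠ unc → p i ≠ none)
    (hsum : ∀ i j, (lo i + hi j).sat (p i) (p j)) :
    ∃ x, ∀ i, (lo i).sat (p i) (some x) ∧ (hi i).sat (some x) (p i) :=
  exists_forall_mem_of_isUpperSet_of_isLowerSet (fun i => isUpperSet_sat_right (lo i) (p i))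
    (fun i => isLowerSet_sat_left (hi i) (p i)) fun i j =>
      exists_sat_sat_of_sat_add (hsum i j) (hlo i) (hhi j) (hplo i) (hphi j)

end Entry

def EDBM.Free {n : ℕ} (M : EDBM n) (k : Fin n) : Prop :=
  M (some k) none = .bot ∨ M (some k) none = .unc

section

variable {n : ℕ} {isP : Fin n → Bool} {M : EDBM n}

theorem sem_Mempty (n : ℕ) (isP : Fin n → Bool) : sem isP (Mempty n) = ∅ := by
  refine Set.eq_empty_of_forall_notMem fun v hv => ?_
  have := hv.2 none none
  norm_num [Mempty, svalE, Entry.bound_sat_some] at this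

theorem svalE_some_ne_none {v : EVal n} {k : Fin n} :
    svalE isP v (some k) ≠ none ↔ v k ≠ none := by
  simp [svalE]

theorem EVal.update_self (v : EVal n) (k : Fin n) (d : Option ℝ) :
    Function.update v k d k = d :=
  Function.update_self k d v

theorem EVal.update_of_ne (v : EVal n) {i k : Fin n} (h : i ≠ k) (d : Option ℝ) :
    Function.update v k d i = v i :=
  Function.update_of_ne h d v

theorem svalE_update_of_ne (v : EVal n) {k : Fin n} (d : Option ℝ) {i : Option (Fin n)}
    (hi : i ≠ some k) : svalE isP (Function.update v k d) i = svalE isP v i := by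
  cases i with
  | none => rfl
  | some i => simp [svalE, EVal.update_of_ne v (Option.some_injective _ |>.ne_iff.1 hi)]

theorem svalE_update_signed (v : EVal n) (k : Fin n) (x : ℝ) :
    svalE isP (Function.update v k (some (if isP k then -x else x))) (some k) = some x := by
  cases h : isP k <;> simp [svalE, EVal.update_self, h]

theorem ENonneg.update {v : EVal n} (hv : ENonneg v) {k : Fin n} {d : Option ℝ}
    (hd : ∀ r, d = some r → 0 ≤ r) : ENonneg (Function.update v k d) := by
  intro i r hr
  by_cases hi : i = k
  · subst hi; exact hd r (by rwa [EVal.update_self] at hr)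
  · exact hv i r (by rwa [EVal.update_of_ne v hi] at hr)

theorem Tight.eq_of_forall_sat (hT : Tight isP M) {i j : Option (Fin n)} {e : Entry}
    (hle : e.le (M i j)) (h : ∀ v ∈ sem isP M, e.sat (svalE isP v i) (svalE isP v j)) :
    M i j = e := by
  let M' : EDBM n := fun i' j' => if i' = i ∧ j' = j then e else M i' j'
  have hM' : ∀ i' j', (M' i' j').le (M i' j') := by
    intro i' j'
    by_cases hc : i' = i ∧ j' = j
    · obtain ⟨rfl, rfl⟩ := hc; simpa [M'] using hle
    · simpa [M', hc] using (M i' j').le_refl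
  have hsem : sem isP M' = sem isP M := by
    ext v
    refine ⟨fun hv => ⟨hv.1, fun i' j' => Entry.sat_mono (hM' i' j') (hv.2 i' j')⟩,
      fun hv => ⟨hv.1, fun i' j' => ?_⟩⟩
    by_cases hc : i' = i ∧ j' = j
    · obtain ⟨rfl, rfl⟩ := hc; simpa [M'] using h v hv
    · simpa [M', hc] using hv.2 i' j'
  simpa [M'] using (congrFun₂ (hT M' hM' hsem) i j).symm

theorem Tight.le_of_forall_sat (hT : Tight isP M) (hne : (sem isP M).Nonempty)
    {i j : Option (Fin n)} {e : Entry} (he : e ≠ .bot)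
    (h : ∀ v ∈ sem isP M, e.sat (svalE isP v i) (svalE isP v j)) : (M i j).le e := by
  by_cases hu : e = .unc
  · subst hu; cases M i j <;> trivial
  obtain ⟨v, hv⟩ := hne
  have hij : M i j ≠ .bot := by
    intro hb
    have hbot := hv.2 i j
    rw [hb] at hbot
    have hreal := Entry.ne_none_of_sat he hu (h v hv)
    exact hbot.elim hreal.1 hreal.2
  rcases Entry.le_total_of_ne_bot hij he with hle | hge
  · exact hle
  · rw [hT.eq_of_forall_sat hge h]; exact e.le_refl

theorem Tight.le_add (hT : Tight isP M) (hne : (sem isP M).Nonempty) (i j k : Option (Fin n)) :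
    (M i j).le (M i k + M k j) :=
  hT.le_of_forall_sat hne (Entry.add_ne_bot _ _) fun _ hv => Entry.sat_add (hv.2 i k) (hv.2 k j)

theorem Tight.nonneg_of_forall_sat (hT : Tight isP M) (hne : (sem isP M).Nonempty) {k : Fin n}
    (hk : ∀ v ∈ sem isP M, v k ≠ none) {v : EVal n}
    (hv : ∀ i j, (M i j).sat (svalE isP v i) (svalE isP v j)) {r : ℝ} (hr : v k = some r) :
    0 ≤ r := by
  have hsign : ∀ u ∈ sem isP M, ∃ r', u k = some r' ∧ 0 ≤ r' := fun u hu =>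
    have ⟨r', hr'⟩ := Option.ne_none_iff_exists'.1 (hk u hu)
    ⟨r', hr', hu.1 k r' hr'⟩
  cases hP : isP k
  · have hle : (M none (some k)).le (.bound 0 false) :=
      hT.le_of_forall_sat hne (by simp) fun u hu => by
        obtain ⟨r', hr', h0⟩ := hsign u hu
        simpa [svalE, hr', hP, Entry.bound_sat_some] using h0
    simpa [svalE, hr, hP, Entry.bound_sat_some] using Entry.sat_mono hle (hv none (some k))
  · have hle : (M (some k) none).le (.bound 0 false) :=
      hT.le_of_forall_sat hne (by simp) fun u hu => by
        obtain ⟨r', hr', h0⟩ := hsign u hu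
        simpa [svalE, hr', hP, Entry.bound_sat_some] using h0
    simpa [svalE, hr, hP, Entry.bound_sat_some] using Entry.sat_mono hle (hv (some k) none)

theorem Coherent.sat_of_free (hC : Coherent M) {k : Fin n} (hk : M.Free k) (i : Option (Fin n))
    (a : Option ℝ) : (M i (some k)).sat a none ∧ (M (some k) i).sat none a := by
  cases i with
  | none =>
    rcases hk with hk | hk
    · rw [hk, (hC.1 k).1.1 hk]; exact ⟨Or.inr rfl, Or.inl rfl⟩
    · rw [hk, (hC.1 k).2.1 hk]; trivial
  | some i =>
    obtain ⟨hki, hik⟩ := hC.2.1 k hk i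
    rw [hki, hik]; trivial

theorem Coherent.ne_bot_of_not_free (hC : Coherent M) (hWF : M.WF) {k : Fin n} (hk : ¬M.Free k)
    (i : Option (Fin n)) : M i (some k) ≠ .bot ∧ M (some k) i ≠ .bot := by
  cases i with
  | none => exact ⟨fun h => hk (Or.inl ((hC.1 k).1.2 h)), fun h => hk (Or.inl h)⟩
  | some i => exact ⟨hWF i k, hWF k i⟩

theorem svalE_ne_none_of_not_free {k : Fin n} (hk : ¬M.Free k) {v : EVal n} {a : Option ℝ}
    (hv : (M (some k) none).sat (svalE isP v (some k)) a) : svalE isP v (some k) ≠ none :=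
  (Entry.ne_none_of_sat (fun h => hk (Or.inl h)) (fun h => hk (Or.inr h)) hv).1

theorem Coherent.svalE_ne_none (hC : Coherent M) {k : Fin n} {w : EVal n}
    (hw : ∀ i j, i ≠ some k → j ≠ some k → (M i j).sat (svalE isP w i) (svalE isP w j))
    {i : Option (Fin n)} (hi : i ≠ some k) (h : M i (some k) ≠ .unc ∨ M (some k) i ≠ .unc) :
    svalE isP w i ≠ none := by
  cases i with
  | none => simp [svalE]
  | some i =>
    refine svalE_ne_none_of_not_free (fun hfree => ?_) (hw (some i) none hi (by simp))
    have := hC.2.1 i hfree k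
    tauto

theorem sat_update_of_sat_row_col {w : EVal n} {k : Fin n} {d : Option ℝ}
    (hw : ∀ i j, i ≠ some k → j ≠ some k → (M i j).sat (svalE isP w i) (svalE isP w j))
    (hk : ∀ i, (M i (some k)).sat (svalE isP (Function.update w k d) i)
        (svalE isP (Function.update w k d) (some k)) ∧
      (M (some k) i).sat (svalE isP (Function.update w k d) (some k))
        (svalE isP (Function.update w k d) i))
    (i j : Option (Fin n)) :
    (M i j).sat (svalE isP (Function.update w k d) i) (svalE isP (Function.update w k d) j) := by
  by_cases hi : i = some k
  · subst hi; exact (hk j).2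
  by_cases hj : j = some k
  · subst hj; exact (hk i).1
  rw [svalE_update_of_ne w d hi, svalE_update_of_ne w d hj]
  exact hw i j hi hj

theorem update_none_mem_sem (hC : Coherent M) {k : Fin n} (hk : M.Free k) {w : EVal n}
    (hw₀ : ENonneg w)
    (hw : ∀ i j, i ≠ some k → j ≠ some k → (M i j).sat (svalE isP w i) (svalE isP w j)) :
    Function.update w k none ∈ sem isP M := by
  have hnone : svalE isP (Function.update w k none) (some k) = none := by
    simp [svalE, EVal.update_self]
  refine ⟨hw₀.update (by simp), sat_update_of_sat_row_col hw fun i => ?_⟩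
  rw [hnone]
  exact hC.sat_of_free hk i _

theorem exists_update_mem_sem_of_not_free (hne : (sem isP M).Nonempty) (hWF : M.WF)
    (hC : Coherent M) (hT : Tight isP M) {k : Fin n} (hk : ¬M.Free k) {w : EVal n}
    (hw₀ : ENonneg w)
    (hw : ∀ i j, i ≠ some k → j ≠ some k → (M i j).sat (svalE isP w i) (svalE isP w j)) :
    ∃ d, Function.update w k d ∈ sem isP M := by
  obtain ⟨x, hx⟩ := Entry.exists_forall_sat (ι := {i // i ≠ some k})
    (lo := fun i => M i (some k)) (hi := fun i => M (some k) i) (p := fun i => svalE isP w i)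
    (fun i => (hC.ne_bot_of_not_free hWF hk i).1) (fun i => (hC.ne_bot_of_not_free hWF hk i).2)
    (fun i h => hC.svalE_ne_none hw i.2 (Or.inl h)) (fun i h => hC.svalE_ne_none hw i.2 (Or.inr h))
    (fun i j => Entry.sat_mono (hT.le_add hne i j (some k)) (hw i j i.2 j.2))
  set w' := Function.update w k (some (if isP k then -x else x))
  have hsat : ∀ i j, (M i j).sat (svalE isP w' i) (svalE isP w' j) :=
    sat_update_of_sat_row_col hw fun i => by
      by_cases hi : i = some k
      · subst hi
        rw [svalE_update_signed]
        obtain ⟨v, hv⟩ := hne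
        have hkk := Entry.sat_some_self (hWF k k) (hv.2 (some k) (some k)) x
        exact ⟨hkk, hkk⟩
      · rw [svalE_update_signed, svalE_update_of_ne w _ hi]; exact hx ⟨i, hi⟩
  refine ⟨_, hw₀.update fun r hr => ?_, hsat⟩
  refine hT.nonneg_of_forall_sat hne (fun v hv => ?_) hsat (k := k) ?_
  · exact svalE_some_ne_none.1 (svalE_ne_none_of_not_free hk (hv.2 (some k) none))
  · exact (EVal.update_self w k _).trans hr

theorem exists_update_mem_sem (hne : (sem isP M).Nonempty) (hWF : M.WF) (hC : Coherent M)
    (hT : Tight isP M) {k : Fin n} {w : EVal n} (hw₀ : ENonneg w)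
    (hw : ∀ i j, i ≠ some k → j ≠ some k → (M i j).sat (svalE isP w i) (svalE isP w j)) :
    ∃ d, Function.update w k d ∈ sem isP M := by
  by_cases hk : M.Free k
  · exact ⟨none, update_none_mem_sem hC hk hw₀ hw⟩
  · exact exists_update_mem_sem_of_not_free hne hWF hC hT hk hw₀ hw

theorem relE_Mempty (k : Fin n) : relE (Mempty n) k = Mempty n :=
  if_pos rfl

theorem relE_apply (hM : M ≠ Mempty n) (k : Fin n) (i j : Option (Fin n)) :
    relE M k i j = if i = some k ∨ j = some k then .unc else M i j := by
  simp [relE, hM]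

theorem sat_of_mem_sem_relE (hM : M ≠ Mempty n) {k : Fin n} {w : EVal n}
    (hw : w ∈ sem isP (relE M k)) (i j : Option (Fin n)) (hi : i ≠ some k) (hj : j ≠ some k) :
    (M i j).sat (svalE isP w i) (svalE isP w j) := by
  simpa [relE_apply hM, hi, hj] using hw.2 i j

theorem update_mem_sem_relE (hM : M ≠ Mempty n) {v : EVal n} (hv : v ∈ sem isP M) (k : Fin n)
    {d : Option ℝ} (hd : ∀ r, d = some r → 0 ≤ r) :
    Function.update v k d ∈ sem isP (relE M k) := by
  refine ⟨hv.1.update hd, fun i j => ?_⟩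
  rw [relE_apply hM]
  split_ifs with h
  · trivial
  · rw [not_or] at h
    rw [svalE_update_of_ne v d h.1, svalE_update_of_ne v d h.2]
    exact hv.2 i j

end

/-- Correctness of release on normal-form EDBMs:
`⟦rel_x(M)⟧ = { v[x := d] : v ∈ ⟦M⟧, d ∈ ℝ≥0 ∪ {⊥} }`. -/
theorem relE_correct {n : ℕ} (isP : Fin n → Bool) (M : EDBM n) (k : Fin n)
    (h : InNormalForm isP M) :
    sem isP (relE M k) =
      { w | ∃ v ∈ sem isP M, ∃ d : Option ℝ, (∀ r, d = some r → 0 ≤ r) ∧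
          w = Function.update v k d } := by
  rcases h with rfl | ⟨hne, hWF, hC, hT⟩
  · rw [relE_Mempty, sem_Mempty]
    refine (Set.eq_empty_of_forall_notMem fun w hw => ?_).symm
    obtain ⟨v, hv, -⟩ := hw
    exact hv
  have hne : (sem isP M).Nonempty := Set.nonempty_iff_ne_empty.2 hne
  have hM : M ≠ Mempty n := by rintro rfl; exact hne.ne_empty (sem_Mempty n isP)
  ext w
  constructor
  · intro hw
    obtain ⟨d, hd⟩ := exists_update_mem_sem hne hWF hC hT hw.1 (sat_of_mem_sem_relE hM hw)
    refine ⟨_, hd, w k, hw.1 k, ?_⟩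
    exact ((Function.update_idem _ _ _).trans (Function.update_eq_self _ _)).symm
  · rintro ⟨v, hv, d, hd, rfl⟩
    exact update_mem_sem_relE hM hv k hd
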